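/- With the data of the previous statement, the map β : U(𝔤) ⊗ M → U(𝔤) determined by x ⊗ m ↦ x·α(m) is a homomorphism of U(𝔤)-bimodules; i.e., (U(𝔤) ⊗ M → U(𝔤)) is an associative algebra object in LM. -/

import Mathlib

/-!
Left linearity of `β` is immediate on pure tensors. For right linearity, the elements `u` with
`β (z · u) = β z * u` for all `z` form a subalgebra of `U(𝔤)`, so it suffices to check the
generators `g ∈ 𝔤`. There `β (x ⊗ m · g) = x g α(m) + x α([m, g])`, and equivariance of `α`
turns `α([m, g])` into the commutator `α(m) g - g α(m)` in `U(𝔤)`, leaving `x α(m) g`.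
-/

open MulOpposite TensorProduct

namespace UniversalEnvelopingAlgebra

theorem adjoin_range_ι (K : Type*) [CommRing K] {L : Type*} [LieRing L] [LieAlgebra K L] :
    Algebra.adjoin K (Set.range (ι K : L → UniversalEnvelopingAlgebra K L)) = ⊤ := by
  have hι : (ι K : L → UniversalEnvelopingAlgebra K L) = mkAlgHom K L ∘ TensorAlgebra.ι K := rfl
  rw [hι, Set.range_comp, ← AlgHom.map_adjoin, TensorAlgebra.adjoin_range_ι, Algebra.map_top,
    AlgHom.range_eq_top]
  exact RingCon.mkₐ_surjective _

end UniversalEnvelopingAlgebra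

section RightLinearity

variable {K A N : Type*} [CommSemiring K] [Semiring A] [Algebra K A] [AddCommMonoid N]
  [Module K N]

def rightLinearitySubalgebra (ρ : Aᵐᵒᵖ →ₐ[K] Module.End K N) (β : N →ₗ[K] A) :
    Subalgebra K A where
  carrier := {a | ∀ z, β (ρ (op a) z) = β z * a}
  mul_mem' {a b} ha hb z := by
    rw [op_mul, map_mul, Module.End.mul_apply, hb, ha, mul_assoc]
  add_mem' {a b} ha hb z := by
    rw [op_add, map_add, LinearMap.add_apply, map_add, ha, hb, mul_add]
  algebraMap_mem' r z := by
    rw [← MulOpposite.algebraMap_apply, AlgHom.commutes, Module.algebraMap_end_apply,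
      map_smul, Algebra.algebraMap_eq_smul_one, mul_smul_comm, mul_one]

end RightLinearity

theorem LinearMap.map_rTensor_mulLeft_of_tmul {K A M : Type*} [CommSemiring K] [Semiring A]
    [Algebra K A] [AddCommMonoid M] [Module K M] {β : A ⊗[K] M →ₗ[K] A} {f : M → A}
    (hβ : ∀ x m, β (x ⊗ₜ m) = x * f m) (u : A) (z : A ⊗[K] M) :
    β (rTensor M (mulLeft K u) z) = u * β z := by
  induction z using TensorProduct.induction_on with
  | zero => simp
  | tmul x m => rw [rTensor_tmul, mulLeft_apply, hβ, hβ, mul_assoc]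
  | add a b ha hb => rw [map_add, map_add, ha, hb, map_add, mul_add]

theorem ι_mem_rightLinearitySubalgebra {K L M : Type*} [CommRing K] [LieRing L]
    [LieAlgebra K L] [AddCommGroup M] [Module K M] {ract : M →ₗ[K] L →ₗ[K] M}
    {α : M →ₗ[K] L} (hα : ∀ m g, α (ract m g) = ⁅α m, g⁆)
    {ρ : (UniversalEnvelopingAlgebra K L)ᵐᵒᵖ →ₐ[K]
      Module.End K (UniversalEnvelopingAlgebra K L ⊗[K] M)}
    (hρ : ∀ g x m, ρ (op (UniversalEnvelopingAlgebra.ι K g)) (x ⊗ₜ[K] m) =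
      (x * UniversalEnvelopingAlgebra.ι K g) ⊗ₜ[K] m + x ⊗ₜ[K] ract m g)
    {β : UniversalEnvelopingAlgebra K L ⊗[K] M →ₗ[K] UniversalEnvelopingAlgebra K L}
    (hβ : ∀ x m, β (x ⊗ₜ[K] m) = x * UniversalEnvelopingAlgebra.ι K (α m)) (g : L) :
    UniversalEnvelopingAlgebra.ι K g ∈ rightLinearitySubalgebra ρ β := by
  intro z
  induction z using TensorProduct.induction_on with
  | zero => simp
  | tmul x m =>
    let _ : LieRing (UniversalEnvelopingAlgebra K L) := LieRing.ofAssociativeRing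
    rw [hρ, map_add, hβ, hβ, hβ, hα, LieHom.map_lie, Ring.lie_def]
    noncomm_ring
  | add a b ha hb => rw [map_add, map_add, ha, hb, map_add, add_mul]

theorem LM_beta_is_bimodule_hom_general {K : Type*} [CommRing K]
    {L : Type*} [LieRing L] [LieAlgebra K L]
    {M : Type*} [AddCommGroup M] [Module K M]
    (ract : M →ₗ[K] L →ₗ[K] M)
    (α : M →ₗ[K] L)
    (hα : ∀ (m : M) (g : L), α (ract m g) = ⁅α m, g⁆)
    -- the right U(𝔤)-action on U(𝔤) ⊗ M
    (ρ : (UniversalEnvelopingAlgebra K L)ᵐᵒᵖ →ₐ[K]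
        Module.End K (UniversalEnvelopingAlgebra K L ⊗[K] M))
    (hρ : ∀ (g : L) (x : UniversalEnvelopingAlgebra K L) (m : M),
      ρ (op (UniversalEnvelopingAlgebra.ι K g)) (x ⊗ₜ[K] m) =
        (x * UniversalEnvelopingAlgebra.ι K g) ⊗ₜ[K] m + x ⊗ₜ[K] ract m g)
    -- the map β : U(𝔤) ⊗ M → U(𝔤), x ⊗ m ↦ x·α(m)
    (β : UniversalEnvelopingAlgebra K L ⊗[K] M →ₗ[K] UniversalEnvelopingAlgebra K L)
    (hβ : ∀ (x : UniversalEnvelopingAlgebra K L) (m : M),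
      β (x ⊗ₜ[K] m) = x * (UniversalEnvelopingAlgebra.ι K) (α m)) :
    -- β is left U(𝔤)-linear
    (∀ (u : UniversalEnvelopingAlgebra K L)
        (z : UniversalEnvelopingAlgebra K L ⊗[K] M),
      β (LinearMap.rTensor M (LinearMap.mulLeft K u) z) = u * β z)
    -- and right U(𝔤)-linear
    ∧ (∀ (w : (UniversalEnvelopingAlgebra K L)ᵐᵒᵖ)
        (z : UniversalEnvelopingAlgebra K L ⊗[K] M),
      β (ρ w z) = β z * w.unop) := by
  refine ⟨LinearMap.map_rTensor_mulLeft_of_tmul hβ, fun w => ?_⟩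
  have hgen : Algebra.adjoin K (Set.range (UniversalEnvelopingAlgebra.ι K))
      ≤ rightLinearitySubalgebra ρ β :=
    Algebra.adjoin_le <| Set.range_subset_iff.mpr <| ι_mem_rightLinearitySubalgebra hα hρ hβ
  rw [UniversalEnvelopingAlgebra.adjoin_range_ι] at hgen
  exact hgen (Algebra.mem_top (x := w.unop))

open MulOpposite TensorProduct in
/-- With `α : M → 𝔤` a Lie algebra object in `LM` and the `U(𝔤)`-bimodule structure on
`U(𝔤) ⊗ M` given by `g·(x ⊗ m) = gx ⊗ m`, `(x ⊗ m)·g = xg ⊗ m + x ⊗ [m,g]`, the map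
`β : U(𝔤) ⊗ M → U(𝔤)`, `x ⊗ m ↦ x·α(m)`, is a homomorphism of `U(𝔤)`-bimodules; i.e.
`(U(𝔤) ⊗ M → U(𝔤))` is an associative algebra object in `LM`. -/
theorem LM_beta_is_bimodule_hom {K : Type*} [CommRing K]
    {L : Type*} [LieRing L] [LieAlgebra K L]
    {M : Type*} [AddCommGroup M] [Module K M]
    (ract : M →ₗ[K] L →ₗ[K] M)
    (hract : ∀ (m : M) (g g' : L),
      ract m ⁅g, g'⁆ = ract (ract m g) g' - ract (ract m g') g)
    (α : M →ₗ[K] L)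
    (hα : ∀ (m : M) (g : L), α (ract m g) = ⁅α m, g⁆)
    -- the right U(𝔤)-action on U(𝔤) ⊗ M
    (ρ : (UniversalEnvelopingAlgebra K L)ᵐᵒᵖ →ₐ[K]
        Module.End K (UniversalEnvelopingAlgebra K L ⊗[K] M))
    (hρ : ∀ (g : L) (x : UniversalEnvelopingAlgebra K L) (m : M),
      ρ (op (UniversalEnvelopingAlgebra.ι K g)) (x ⊗ₜ[K] m) =
        (x * UniversalEnvelopingAlgebra.ι K g) ⊗ₜ[K] m + x ⊗ₜ[K] ract m g)
    -- the map β : U(𝔤) ⊗ M → U(𝔤), x ⊗ m ↦ x·α(m)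
    (β : UniversalEnvelopingAlgebra K L ⊗[K] M →ₗ[K] UniversalEnvelopingAlgebra K L)
    (hβ : ∀ (x : UniversalEnvelopingAlgebra K L) (m : M),
      β (x ⊗ₜ[K] m) = x * (UniversalEnvelopingAlgebra.ι K) (α m)) :
    -- β is left U(𝔤)-linear
    (∀ (u : UniversalEnvelopingAlgebra K L)
        (z : UniversalEnvelopingAlgebra K L ⊗[K] M),
      β (LinearMap.rTensor M (LinearMap.mulLeft K u) z) = u * β z)
    -- and right U(𝔤)-linear
    ∧ (∀ (w : (UniversalEnvelopingAlgebra K L)ᵐᵒᵖ)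
        (z : UniversalEnvelopingAlgebra K L ⊗[K] M),
      β (ρ w z) = β z * w.unop) :=
  LM_beta_is_bimodule_hom_general ract α hα ρ hρ β hβ
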